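/- arXiv:1708.00615 — 7 statements merged into one kernel-verified Lean document; each statement's English description precedes it below -/
import Mathlib

section
/- Every automorphism of a Miller group fixes the commutator subgroup elementwise: if G is a Miller group, then φ(x) = x for every automorphism φ of G and every x in the commutator subgroup [G,G]. -/
/-!
An automorphism `φ` commuting with every inner automorphism moves each element only by a
central factor: `φ g = g * z` with `z = g⁻¹ * φ g ∈ Z(G)`. Central factors cancel in
commutators, so `φ` fixes every commutator `⁅a, b⁆`, hence the subgroup they generate. In a
Miller group every automorphism commutes with the inner ones.
-/

/-- A Miller group: a finite non-abelian group whose full automorphism group is abelian. -/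
def IsMiller (G : Type*) [Group G] : Prop :=
  Finite G ∧ (∃ a b : G, a * b ≠ b * a) ∧ ∀ φ ψ : MulAut G, φ * ψ = ψ * φ

open scoped commutatorElement

open Subgroup

theorem commutatorElement_mul_mem_center {G : Type*} [Group G] (a b : G) {z w : G}
    (hz : z ∈ center G) (hw : w ∈ center G) : ⁅a * z, b * w⁆ = ⁅a, b⁆ := by
  have hz' := mem_center_iff.mp hz
  have hw' := mem_center_iff.mp hw
  calc ⁅a * z, b * w⁆ = a * (z * (b * w) * z⁻¹) * a⁻¹ * (b * w)⁻¹ := by group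
    _ = a * b * (w * a⁻¹ * w⁻¹) * b⁻¹ := by rw [← hz' (b * w)]; group
    _ = ⁅a, b⁆ := by rw [← hw' a⁻¹]; group

namespace MulAut

variable {G : Type*} [Group G]

theorem inv_mul_apply_mem_center_of_commute_conj (φ : MulAut G) (g : G)
    (h : Commute φ (conj g)) : g⁻¹ * φ g ∈ center G := by
  refine mem_center_iff.mpr fun y => ?_
  have hy : φ g * y * (φ g)⁻¹ = g * y * g⁻¹ := by
    simpa using congrArg (fun ψ : MulAut G => ψ (φ.symm y)) h.eq
  calc y * (g⁻¹ * φ g) = g⁻¹ * (g * y * g⁻¹) * φ g := by group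
    _ = g⁻¹ * φ g * y := by rw [← hy]; group

theorem apply_eq_self_of_mem_commutator {φ : MulAut G} (hφ : ∀ g, g⁻¹ * φ g ∈ center G)
    {x : G} (hx : x ∈ commutator G) : φ x = x := by
  rw [commutator_def] at hx
  refine (commutator_le.mpr fun a _ b _ => ?_ :
    ⁅(⊤ : Subgroup G), ⊤⁆ ≤ MonoidHom.eqLocus φ.toMonoidHom (MonoidHom.id G)) hx
  change φ ⁅a, b⁆ = ⁅a, b⁆
  rw [map_commutatorElement, ← mul_inv_cancel_left a (φ a), ← mul_inv_cancel_left b (φ b),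
    commutatorElement_mul_mem_center _ _ (hφ a) (hφ b)]

end MulAut

/-- Every automorphism of a Miller group fixes the commutator subgroup elementwise. -/
theorem miller_aut_fixes_commutator
    (G : Type*) [Group G] (hG : IsMiller G) :
    ∀ (φ : MulAut G) (x : G), x ∈ commutator G → φ x = x := by
  intro φ x hx
  obtain ⟨-, -, hcomm⟩ := hG
  exact MulAut.apply_eq_self_of_mem_commutator
    (fun g => MulAut.inv_mul_apply_mem_center_of_commute_conj φ g (hcomm _ _)) hx
end

section
/- If p is a prime and G is a Miller p-group, then Aut(G) is a p-group (every automorphism of G has p-power order). -/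
open Subgroup

section

variable {G : Type*} [Group G]

namespace MulAut

theorem inv_mul_apply_mem_center {τ : MulAut G} (hτ : ∀ a : G, Commute τ (conj a)) (g : G) :
    g⁻¹ * τ g ∈ center G := by
  rw [mem_center_iff]
  intro x
  have h := congr($(hτ g) (τ.symm x))
  simp only [mul_apply, conj_apply, map_mul, map_inv, MulEquiv.apply_symm_apply] at h
  calc x * (g⁻¹ * τ g) = g⁻¹ * (g * x * g⁻¹) * τ g := by group
    _ = g⁻¹ * (τ g * x * (τ g)⁻¹) * τ g := by rw [h]
    _ = g⁻¹ * τ g * x := by group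

/-- `g⁻¹ * τ g` is the commutator `[g, τ]` in the holomorph of `G`. -/
def commutatorHom (τ : MulAut G) (hτ : ∀ a : G, Commute τ (conj a)) : G →* G where
  toFun g := g⁻¹ * τ g
  map_one' := by simp
  map_mul' g h := by
    have hz := mem_center_iff.mp (inv_mul_apply_mem_center hτ g) h⁻¹
    calc (g * h)⁻¹ * τ (g * h) = h⁻¹ * (g⁻¹ * τ g) * τ h := by simp only [map_mul]; group
      _ = g⁻¹ * τ g * (h⁻¹ * τ h) := by rw [hz]; group

theorem apply_eq_mul_commutatorHom {τ : MulAut G} (hτ : ∀ a : G, Commute τ (conj a)) (g : G) :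
    τ g = g * commutatorHom τ hτ g := by
  simp [commutatorHom]

theorem commutatorHom_eq_one_iff {τ : MulAut G} (hτ : ∀ a : G, Commute τ (conj a)) {g : G} :
    commutatorHom τ hτ g = 1 ↔ τ g = g :=
  inv_mul_eq_one.trans eq_comm

theorem pow_apply_eq_mul_pow {τ : MulAut G} {g y : G} (hy : τ y = y) (hg : τ g = g * y)
    (k : ℕ) : (τ ^ k) g = g * y ^ k := by
  induction k with
  | zero => simp
  | succ k ih => rw [pow_succ', mul_apply, ih, map_mul, map_pow, hg, hy, pow_succ', mul_assoc]

def ofCentralHom (ψ : G →* G) (hc : ∀ g, ψ g ∈ center G) (hψ : ∀ g, ψ (ψ g) = 1) :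
    MulAut G where
  toFun g := g * ψ g
  invFun g := g * (ψ g)⁻¹
  left_inv g := by simp [hψ]
  right_inv g := by simp [hψ]
  map_mul' g h := by
    simp only [map_mul]
    rw [mul_assoc g h, ← mul_assoc h, mem_center_iff.mp (hc g) h]
    group

@[simp]
theorem ofCentralHom_apply (ψ : G →* G) (hc : ∀ g, ψ g ∈ center G) (hψ : ∀ g, ψ (ψ g) = 1)
    (g : G) : ofCentralHom ψ hc hψ g = g * ψ g :=
  rfl

end MulAut

namespace IsPGroup

variable {p : ℕ}

theorem eq_one_of_mulAut_apply_eq_mul (hG : IsPGroup p G) {τ : MulAut G}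
    (hcop : p.Coprime (orderOf τ)) {g y : G} (hy : τ y = y) (hg : τ g = g * y) : y = 1 := by
  have hpow := MulAut.pow_apply_eq_mul_pow hy hg (orderOf τ)
  rw [pow_orderOf_eq_one, MulAut.one_apply, left_eq_mul] at hpow
  exact (hG.powEquiv hcop).injective (by simp [powEquiv_apply, hpow])

theorem eq_one_of_mem_range_commutatorHom (hG : IsPGroup p G) {τ : MulAut G}
    (hτ : ∀ a : G, Commute τ (MulAut.conj a)) (hcop : p.Coprime (orderOf τ)) {b : G}
    (hb : b ∈ (MulAut.commutatorHom τ hτ).range) (hfix : τ b = b) : b = 1 := by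
  obtain ⟨g, rfl⟩ := hb
  exact hG.eq_one_of_mulAut_apply_eq_mul hcop hfix (MulAut.apply_eq_mul_commutatorHom hτ g)

variable [Finite G]

theorem of_forall_coprime_orderOf_eq_one (hp : p.Prime)
    (h : ∀ g : G, p.Coprime (orderOf g) → g = 1) : IsPGroup p G := fun g =>
  ⟨(orderOf g).factorization p, h _ <| by
    rw [orderOf_pow, Nat.gcd_eq_right (Nat.ordProj_dvd _ _)]
    exact Nat.coprime_ordCompl hp (orderOf_pos g).ne'⟩

theorem exists_normal_index_eq_prime_le [Fact p.Prime] (hG : IsPGroup p G) {H : Subgroup G}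
    (hH : H ≠ ⊤) : ∃ N : Subgroup G, N.Normal ∧ N.index = p ∧ H ≤ N := by
  obtain ⟨k, hk⟩ := (hG.to_subgroup H).exists_card_eq
  obtain ⟨j, hj⟩ := hG.index H
  obtain ⟨i, rfl⟩ : ∃ i, j = i + 1 :=
    Nat.exists_eq_add_one.mpr (Nat.pos_of_ne_zero (by rintro rfl; exact hH (index_eq_one.mp hj)))
  have hcard : Nat.card G = p ^ (k + i) * p := by
    rw [← H.index_mul_card, hj, hk]
    ring
  obtain ⟨N, hN, hHN⟩ := Sylow.exists_subgroup_card_pow_prime_le p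
    (hcard ▸ dvd_mul_right _ _) H hk (Nat.le_add_right k i)
  have hindex : N.index = p := by
    have h := N.index_mul_card
    rw [hN, hcard, mul_comm] at h
    exact Nat.eq_of_mul_eq_mul_left (pow_pos (Fact.out : p.Prime).pos _) h
  refine ⟨N, normal_of_index_eq_minFac_card ?_, hindex, hHN⟩
  rw [hcard, ← pow_succ, (Fact.out : p.Prime).pow_minFac (by omega), hindex]

theorem exists_monoidHom_range_le_le_ker [Fact p.Prime] (hG : IsPGroup p G) {B : Subgroup G}
    (hB : B ≠ ⊥) (hB' : B ≠ ⊤) : ∃ ψ : G →* G, ψ.range ≤ B ∧ B ≤ ψ.ker ∧ ψ ≠ 1 := by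
  obtain ⟨N, _, hindex, hBN⟩ := hG.exists_normal_index_eq_prime_le hB'
  have hpB : p ∣ Nat.card B :=
    (hG.to_subgroup B).card_eq_or_dvd.resolve_left (card_eq_one.not.mpr hB)
  obtain ⟨b, hb⟩ := exists_prime_orderOf_dvd_card' p hpB
  let e : G ⧸ N ≃* zpowers (b : G) :=
    mulEquivOfPrimeCardEq hindex (by rw [Nat.card_zpowers, orderOf_coe, hb])
  refine ⟨(zpowers (b : G)).subtype.comp (e.toMonoidHom.comp (QuotientGroup.mk' N)), ?_, ?_, ?_⟩
  · rintro _ ⟨g, rfl⟩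
    exact zpowers_le.mpr b.2 (e g).2
  · intro g hg
    simp [(QuotientGroup.eq_one_iff g).mpr (hBN hg)]
  · obtain ⟨g, hg⟩ := SetLike.exists_not_mem_of_ne_top N fun h =>
      (Fact.out : p.Prime).ne_one (by rw [← hindex, h, index_top])
    exact fun hψ => hg (by simpa using DFunLike.congr_fun hψ g)

theorem exists_mem_range_commutatorHom_apply_mul_eq (hG : IsPGroup p G) {τ : MulAut G}
    (hτ : ∀ a : G, Commute τ (MulAut.conj a)) (hcop : p.Coprime (orderOf τ)) (g : G) :
    ∃ c ∈ (MulAut.commutatorHom τ hτ).range, τ (g * c) = g * c := by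
  set φ := MulAut.commutatorHom τ hτ
  let φB : φ.range →* φ.range := (φ.comp φ.range.subtype).codRestrict φ.range fun b => ⟨b, rfl⟩
  have hinj : Function.Injective φB := by
    refine (injective_iff_map_eq_one φB).mpr fun b hb => Subtype.ext ?_
    have hφb : φ b = 1 := congrArg Subtype.val hb
    exact hG.eq_one_of_mem_range_commutatorHom hτ hcop b.2
      ((MulAut.commutatorHom_eq_one_iff hτ).mp hφb)
  obtain ⟨c, hc⟩ := (Finite.injective_iff_surjective.mp hinj) ⟨(φ g)⁻¹, inv_mem ⟨g, rfl⟩⟩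
  refine ⟨c, c.2, (MulAut.commutatorHom_eq_one_iff hτ).mp ?_⟩
  have hφc : φ c = (φ g)⁻¹ := congrArg Subtype.val hc
  rw [map_mul, hφc, mul_inv_cancel]

theorem mulAut_eq_one_of_coprime_of_mem_center [Fact p.Prime] (hG : IsPGroup p G)
    (hnc : ∃ a b : G, a * b ≠ b * a) {τ : MulAut G} (hτ : τ ∈ center (MulAut G))
    (hcop : p.Coprime (orderOf τ)) : τ = 1 := by
  have hconj : ∀ a : G, Commute τ (MulAut.conj a) := fun a => (mem_center_iff.mp hτ _).symm
  set φ := MulAut.commutatorHom τ hconj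
  have hφc : φ.range ≤ center G := by
    rintro _ ⟨g, rfl⟩
    exact MulAut.inv_mul_apply_mem_center hconj g
  by_contra hτ1
  have hB : φ.range ≠ ⊥ := fun h => hτ1 <| MulEquiv.ext fun g =>
    (MulAut.commutatorHom_eq_one_iff hconj).mp
      (DFunLike.congr_fun (MonoidHom.range_eq_bot_iff.mp h) g)
  have hB' : φ.range ≠ ⊤ := fun h => by
    obtain ⟨a, b, hab⟩ := hnc
    exact hab (mem_center_iff.mp (hφc (h ▸ mem_top a)) b).symm
  obtain ⟨ψ, hψB, hBψ, hψ1⟩ := hG.exists_monoidHom_range_le_le_ker hB hB'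
  obtain ⟨g, hg⟩ : ∃ g, ψ g ≠ 1 := by
    by_contra! h
    exact hψ1 (MonoidHom.ext h)
  obtain ⟨c, hc, hfix⟩ := hG.exists_mem_range_commutatorHom_apply_mul_eq hconj hcop g
  set x := g * c
  have hψc : ∀ y, ψ y ∈ center G := fun y => hφc (hψB ⟨y, rfl⟩)
  have hψψ : ∀ y, ψ (ψ y) = 1 := fun y => hBψ (hψB ⟨y, rfl⟩)
  have hψx : τ (ψ x) = ψ x := by
    have h := congr($(mem_center_iff.mp hτ (MulAut.ofCentralHom ψ hψc hψψ)) x)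
    rw [MulAut.mul_apply, MulAut.mul_apply, hfix, MulAut.ofCentralHom_apply, map_mul τ, hfix] at h
    exact (mul_left_cancel h).symm
  have hψx1 := hG.eq_one_of_mem_range_commutatorHom hconj hcop (hψB ⟨x, rfl⟩) hψx
  rw [map_mul, MonoidHom.mem_ker.mp (hBψ hc), mul_one] at hψx1
  exact hg hψx1

end IsPGroup

end

/-- If `G` is a Miller `p`-group, then `Aut(G)` is a `p`-group. -/
theorem miller_pGroup_aut_isPGroup
    (p : ℕ) (hp : p.Prime) (G : Type*) [Group G]
    (hG : IsMiller G) (hpG : IsPGroup p G) :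
    IsPGroup p (MulAut G) := by
  obtain ⟨_, hnc, hcomm⟩ := hG
  have : Fact p.Prime := ⟨hp⟩
  exact IsPGroup.of_forall_coprime_orderOf_eq_one hp fun τ hcop =>
    hpG.mulAut_eq_one_of_coprime_of_mem_center hnc (mem_center_iff.mpr fun σ => hcomm σ τ) hcop
end

section
/- Let p be an odd prime and let G be a finite p-group of nilpotency class at most 2. Then G has a finite generating set {x_1, …, x_n} such that the cyclic subgroups generated by distinct generators intersect trivially: ⟨x_i⟩ ∩ ⟨x_j⟩ = 1 for all i ≠ j. -/
/-!
Baer's trick. In a group of odd order, squaring is a bijection, inverted by `g ↦ g ^ m` with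
`2 * m ≡ 1` modulo the order. When commutators are central, `a ∘ b = a * b * ⁅b, a⁆ ^ m`
("`a * b` times the inverse square root of `⁅a, b⁆`") is an abelian group law on the same
set, with the same powers as the original one; moreover every subgroup for `*` is a subgroup
for `∘`. A basis of the abelian group `(G, ∘)` given by the structure theorem, i.e. a generating
family whose cyclic subgroups are pairwise independent, is therefore also such a family for `G`.
-/

open Subgroup Function
open scoped commutatorElement

theorem IsPGroup.odd_card {p : ℕ} (hp : Odd p) {G : Type*} [Group G] [Finite G]
    (hG : IsPGroup p G) : Odd (Nat.card G) := by
  refine Nat.not_even_iff_odd.mp fun heven => ?_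
  have : Fact (Nat.Prime 2) := ⟨Nat.prime_two⟩
  obtain ⟨g, hg⟩ := exists_prime_orderOf_dvd_card' 2 (even_iff_two_dvd.mp heven)
  obtain ⟨k, hk⟩ := hG g
  have htwo : 2 ∣ p ^ k := hg ▸ orderOf_dvd_of_pow_eq_one hk
  exact Nat.not_even_iff_odd.mpr hp.pow (even_iff_two_dvd.mpr htwo)

theorem exists_pow_two_mul_eq_self_of_odd_card {G : Type*} [Group G] (h : Odd (Nat.card G)) :
    ∃ m : ℕ, ∀ g : G, g ^ (2 * m) = g := by
  obtain ⟨t, ht⟩ := h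
  refine ⟨t + 1, fun g => ?_⟩
  rw [show 2 * (t + 1) = Nat.card G + 1 by omega, pow_succ, pow_card_eq_one', one_mul]

section ClassTwo

variable {G : Type*} [Group G]

theorem commutatorElement_mem_center (hc : commutator G ≤ center G) (a b : G) :
    ⁅a, b⁆ ∈ center G :=
  hc <| commutator_def G ▸ commutator_mem_commutator (mem_top a) (mem_top b)

theorem commutatorElement_mul_right_of_le_center (hc : commutator G ≤ center G) (a b c : G) :
    ⁅a, b * c⁆ = ⁅a, b⁆ * ⁅a, c⁆ := by
  rw [commutatorElement_mul_right_eq_mul_conj, mul_assoc _ b,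
    mem_center_iff.mp (commutatorElement_mem_center hc a c) b, ← mul_assoc, mul_inv_cancel_right]

theorem commutatorElement_mul_left_of_le_center (hc : commutator G ≤ center G) (a b c : G) :
    ⁅a * b, c⁆ = ⁅a, c⁆ * ⁅b, c⁆ := by
  rw [← commutatorElement_inv, commutatorElement_mul_right_of_le_center hc, mul_inv_rev,
    commutatorElement_inv, commutatorElement_inv,
    mem_center_iff.mp (commutatorElement_mem_center hc b c)]

theorem commute_commutatorElement (hc : commutator G ≤ center G) (a b g : G) :
    Commute ⁅a, b⁆ g :=
  (mem_center_iff.mp (commutatorElement_mem_center hc a b) g).symm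

theorem baer_mul_assoc (hc : commutator G ≤ center G) (m : ℕ) (x y z : G) :
    x * y * ⁅y, x⁆ ^ m * z * ⁅z, x * y * ⁅y, x⁆ ^ m⁆ ^ m =
      x * (y * z * ⁅z, y⁆ ^ m) * ⁅y * z * ⁅z, y⁆ ^ m, x⁆ ^ m := by
  have hcomm := commute_commutatorElement hc
  have hzx : ⁅z, x * y * ⁅y, x⁆ ^ m⁆ = ⁅z, x⁆ * ⁅z, y⁆ := by
    rw [commutatorElement_mul_right_of_le_center hc, commutatorElement_mul_right_of_le_center hc,
      commutatorElement_eq_one_iff_commute.mpr ((hcomm y x z).pow_left m).symm, mul_one]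
  have hyzx : ⁅y * z * ⁅z, y⁆ ^ m, x⁆ = ⁅y, x⁆ * ⁅z, x⁆ := by
    rw [commutatorElement_mul_left_of_le_center hc, commutatorElement_mul_left_of_le_center hc,
      commutatorElement_eq_one_iff_commute.mpr ((hcomm z y x).pow_left m), mul_one]
  rw [hzx, hyzx, (hcomm z x _).mul_pow, (hcomm y x _).mul_pow]
  simp only [mul_assoc, ((hcomm y x z).pow_left m).left_comm, ((hcomm z y _).pow_left m).left_comm]
  rw [((hcomm z x _).pow_left m).eq]

theorem baer_mul_comm (hc : commutator G ≤ center G) {m : ℕ} (hm : ∀ g : G, g ^ (2 * m) = g)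
    (x y : G) : x * y * ⁅y, x⁆ ^ m = y * x * ⁅x, y⁆ ^ m := by
  have hxy : x * y = y * x * ⁅x, y⁆ := by
    rw [← (commute_commutatorElement hc x y (y * x)).eq, commutatorElement_def]
    group
  have hsqrt : ⁅x, y⁆ * (⁅x, y⁆ ^ m)⁻¹ = ⁅x, y⁆ ^ m := by
    rw [mul_inv_eq_iff_eq_mul, ← pow_add, ← two_mul, hm]
  rw [hxy, ← commutatorElement_inv x y, inv_pow, mul_assoc, hsqrt]

end ClassTwo

@[ext]
structure BaerGroup {G : Type*} [Group G] {m : ℕ} (hc : commutator G ≤ center G)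
    (hm : ∀ g : G, g ^ (2 * m) = g) where
  val : G

namespace BaerGroup

variable {G : Type*} [Group G] {m : ℕ} {hc : commutator G ≤ center G}
  {hm : ∀ g : G, g ^ (2 * m) = g}

instance : Mul (BaerGroup hc hm) := ⟨fun a b => ⟨a.val * b.val * ⁅b.val, a.val⁆ ^ m⟩⟩

instance : One (BaerGroup hc hm) := ⟨⟨1⟩⟩

instance : Inv (BaerGroup hc hm) := ⟨fun a => ⟨a.val⁻¹⟩⟩

theorem val_mul (a b : BaerGroup hc hm) :
    (a * b).val = a.val * b.val * ⁅b.val, a.val⁆ ^ m :=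
  rfl

theorem val_one : (1 : BaerGroup hc hm).val = 1 := rfl

theorem val_inv (a : BaerGroup hc hm) : a⁻¹.val = a.val⁻¹ := rfl

-- Powers are those of `G`, so that `(a ^ k).val = a.val ^ k` holds by `rfl`.
instance : CommGroup (BaerGroup hc hm) where
  mul_assoc a b c := BaerGroup.ext (baer_mul_assoc hc m a.val b.val c.val)
  one_mul a := BaerGroup.ext (by simp [val_mul, val_one])
  mul_one a := BaerGroup.ext (by simp [val_mul, val_one])
  inv_mul_cancel a := BaerGroup.ext <| by
    simp [val_mul, val_one, val_inv, (Commute.refl a.val).inv_right.commutator_eq]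
  npow n a := ⟨a.val ^ n⟩
  npow_zero a := BaerGroup.ext (pow_zero a.val)
  npow_succ n a := BaerGroup.ext <|
    show a.val ^ (n + 1) = a.val ^ n * a.val * ⁅a.val, a.val ^ n⁆ ^ m by
    simp [pow_succ, ((Commute.refl a.val).pow_right n).commutator_eq]
  zpow k a := ⟨a.val ^ k⟩
  zpow_zero' a := BaerGroup.ext (zpow_zero a.val)
  zpow_succ' n a := BaerGroup.ext <|
    show a.val ^ (n + 1 : ℤ) = a.val ^ (n : ℤ) * a.val * ⁅a.val, a.val ^ (n : ℤ)⁆ ^ m by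
    simp [zpow_add_one, ((Commute.refl a.val).pow_right n).commutator_eq]
  zpow_neg' n a := BaerGroup.ext <|
    show a.val ^ Int.negSucc n = (a.val ^ ((n + 1 : ℕ) : ℤ))⁻¹ by
    rw [zpow_negSucc, zpow_natCast]
  mul_comm a b := BaerGroup.ext (baer_mul_comm hc hm a.val b.val)

instance [Finite G] : Finite (BaerGroup hc hm) := Finite.of_injective val fun _ _ => BaerGroup.ext

theorem disjoint_zpowers_val {a b : BaerGroup hc hm} (h : Disjoint (zpowers a) (zpowers b)) :
    Disjoint (zpowers a.val) (zpowers b.val) := by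
  rw [disjoint_def] at h ⊢
  rintro g ⟨k, rfl⟩ ⟨l, hl⟩
  exact congrArg val (h (x := a ^ k) ⟨k, rfl⟩ ⟨l, BaerGroup.ext hl⟩)

def _root_.Subgroup.toBaerGroup (H : Subgroup G) : Subgroup (BaerGroup hc hm) where
  carrier := {a | a.val ∈ H}
  mul_mem' {a b} (ha : a.val ∈ H) (hb : b.val ∈ H) := mul_mem (mul_mem ha hb) <|
    pow_mem (commutatorElement_def b.val a.val ▸
      mul_mem (mul_mem (mul_mem hb ha) (inv_mem hb)) (inv_mem ha)) m
  one_mem' := show (1 : G) ∈ H from H.one_mem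
  inv_mem' {a} (ha : a.val ∈ H) := inv_mem ha

theorem closure_range_val_eq_top {ι : Type*} {x : ι → BaerGroup hc hm}
    (h : closure (Set.range x) = ⊤) : closure (Set.range fun i => (x i).val) = ⊤ := by
  have hle : closure (Set.range x) ≤ (closure (Set.range fun i => (x i).val)).toBaerGroup :=
    closure_le _ |>.mpr <| Set.range_subset_iff.mpr fun i => subset_closure ⟨i, rfl⟩
  rw [h, top_le_iff, eq_top_iff'] at hle
  exact (eq_top_iff' _).mpr fun g => hle (mk g)

end BaerGroup

theorem ZMod.zpowers_ofAdd_one (n : ℕ) : zpowers (Multiplicative.ofAdd (1 : ZMod n)) = ⊤ :=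
  (eq_top_iff' _).mpr fun a =>
    ⟨(Multiplicative.toAdd a).cast, by
      simp only [← ofAdd_zsmul, zsmul_one, ZMod.intCast_zmod_cast, ofAdd_toAdd]⟩

section Pi

variable {ι : Type*} [DecidableEq ι] {M : ι → Type*} [∀ i, Group (M i)]

theorem Pi.closure_range_mulSingle_eq_top [Finite ι] {g : ∀ i, M i}
    (hg : ∀ i, zpowers (g i) = ⊤) :
    closure (Set.range fun i => Pi.mulSingle i (g i)) = ⊤ := by
  refine (eq_top_iff' _).mpr fun x => pi_mem_of_mulSingle_mem x fun i => ?_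
  obtain ⟨k, hk⟩ := mem_zpowers_iff.mp ((hg i).symm ▸ mem_top (x i))
  rw [← hk, Pi.mulSingle_zpow]
  exact zpow_mem (subset_closure (Set.mem_range_self i)) k

theorem Pi.disjoint_zpowers_mulSingle {i j : ι} (hij : i ≠ j) (a : M i) (b : M j) :
    Disjoint (zpowers (Pi.mulSingle i a)) (zpowers (Pi.mulSingle j b)) := by
  rw [disjoint_def]
  rintro _ ⟨k, rfl⟩ ⟨l, hl⟩
  simp only [← Pi.mulSingle_zpow] at hl ⊢
  have hak : a ^ k = 1 := by simpa [Pi.mulSingle_eq_of_ne hij] using (congrFun hl i).symm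
  rw [hak, Pi.mulSingle_one]

end Pi

section Transport

variable {A B ι : Type*} [Group A] [Group B] {f : A →* B}

theorem Subgroup.closure_range_comp_eq_top_of_surjective (hf : Surjective f) {x : ι → A}
    (h : closure (Set.range x) = ⊤) : closure (Set.range (f ∘ x)) = ⊤ := by
  rw [Set.range_comp, ← MonoidHom.map_closure, h, map_top_of_surjective f hf]

theorem Subgroup.disjoint_zpowers_map_of_injective (hf : Injective f) {a b : A}
    (h : Disjoint (zpowers a) (zpowers b)) : Disjoint (zpowers (f a)) (zpowers (f b)) := by
  rw [← MonoidHom.map_zpowers, ← MonoidHom.map_zpowers]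
  exact disjoint_map hf h

end Transport

theorem CommGroup.exists_closure_eq_top_pairwise_disjoint_zpowers (A : Type*) [CommGroup A]
    [Finite A] : ∃ (n : ℕ) (x : Fin n → A),
      closure (Set.range x) = ⊤ ∧ Pairwise (Disjoint on fun i => zpowers (x i)) := by
  classical
  obtain ⟨ι, _, d, -, ⟨e⟩⟩ := equiv_prod_multiplicative_zmod_of_finite A
  let σ := (Fintype.equivFin ι).symm
  let y : ι → A := e.symm.toMonoidHom ∘ fun i => Pi.mulSingle i (Multiplicative.ofAdd 1)
  refine ⟨Fintype.card ι, y ∘ σ, ?_, fun i j hij => ?_⟩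
  · rw [EquivLike.range_comp]
    exact closure_range_comp_eq_top_of_surjective e.symm.surjective
      (Pi.closure_range_mulSingle_eq_top fun i => ZMod.zpowers_ofAdd_one (d i))
  · exact disjoint_zpowers_map_of_injective e.symm.injective
      (Pi.disjoint_zpowers_mulSingle (σ.injective.ne hij) _ _)

theorem pGroup_class_two_generating_set_trivial_intersections_general
    (p : ℕ) (hodd : Odd p)
    (G : Type*) [Group G] [Finite G] (hpG : IsPGroup p G)
    (hclass : commutator G ≤ Subgroup.center G) :
    ∃ (n : ℕ) (x : Fin n → G),
      Subgroup.closure (Set.range x) = ⊤ ∧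
      ∀ i j : Fin n, i ≠ j →
        Subgroup.zpowers (x i) ⊓ Subgroup.zpowers (x j) = ⊥ := by
  obtain ⟨m, hm⟩ := exists_pow_two_mul_eq_self_of_odd_card (hpG.odd_card hodd)
  obtain ⟨n, x, hgen, hdisj⟩ :=
    CommGroup.exists_closure_eq_top_pairwise_disjoint_zpowers (BaerGroup hclass hm)
  exact ⟨n, fun i => (x i).val, BaerGroup.closure_range_val_eq_top hgen,
    fun i j hij => disjoint_iff.mp (BaerGroup.disjoint_zpowers_val (hdisj hij))⟩

/-- A finite `p`-group of class at most `2` (`p` odd) has a generating set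
`x_1, …, x_n` with `⟨x_i⟩ ∩ ⟨x_j⟩ = 1` for `i ≠ j`. -/
theorem pGroup_class_two_generating_set_trivial_intersections
    (p : ℕ) (hp : p.Prime) (hodd : Odd p)
    (G : Type*) [Group G] [Finite G] (hpG : IsPGroup p G)
    (hclass : commutator G ≤ Subgroup.center G) :
    ∃ (n : ℕ) (x : Fin n → G),
      Subgroup.closure (Set.range x) = ⊤ ∧
      ∀ i j : Fin n, i ≠ j →
        Subgroup.zpowers (x i) ⊓ Subgroup.zpowers (x j) = ⊥ :=
  pGroup_class_two_generating_set_trivial_intersections_general p hodd G hpG hclass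
end

section
/- If p is an odd prime and G is a Miller p-group, then G is purely non-abelian. -/
/-- A group is purely non-abelian if it has no non-trivial abelian direct factor:
whenever `G ≃* A × N` with `A` abelian, `A` is trivial. -/
def PurelyNonAbelian (G : Type u) [Group G] : Prop :=
  ∀ (A N : Type u) [Group A] [Group N],
    (∀ a b : A, a * b = b * a) → Nonempty (G ≃* A × N) → ∀ a : A, a = 1

/-!
If `G ≃* A × N` with `A` abelian and nontrivial, then `N` is nontrivial because `G` is not
abelian. Both are `p`-groups, so `A` maps onto a group of order `p`, which embeds into the
nontrivial `p`-group `Z(N)`; this gives a homomorphism `f : A → Z(N)` with `f b ≠ 1`.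
Inversion on `A` and the shear `(a, n) ↦ (a, n * f a)` are automorphisms of `A × N`; comparing
both composites at `(b, 1)` shows `f b = (f b)⁻¹`, and an involution in a group of odd order
is trivial.
-/

open Subgroup

theorem IsPGroup.exists_monoidHom_apply_ne_one {p : ℕ} [Fact p.Prime] {A B : Type*}
    [CommGroup A] [Group B] [Finite A] [Finite B] [Nontrivial A] [Nontrivial B]
    (hA : IsPGroup p A) (hB : IsPGroup p B) : ∃ (f : A →* B) (a : A), f a ≠ 1 := by
  have hp : p.Prime := Fact.out
  obtain ⟨n, hn, hcardA⟩ := hA.nontrivial_iff_card.mp ‹_›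
  obtain ⟨m, hm, hcardB⟩ := hB.nontrivial_iff_card.mp ‹_›
  obtain ⟨H, hH⟩ := Sylow.exists_subgroup_card_pow_prime p (n := n - 1)
    (hcardA ▸ pow_dvd_pow p (Nat.sub_le n 1))
  have hquot : Nat.card (A ⧸ H) = p := by
    have := H.card_eq_card_quotient_mul_card_subgroup
    rw [hcardA, hH, ← Nat.sub_add_cancel hn, pow_succ, Nat.add_sub_cancel] at this
    exact (Nat.eq_of_mul_eq_mul_left (pow_pos hp.pos _) (by linarith)).symm
  obtain ⟨z, hz⟩ := exists_prime_orderOf_dvd_card' (G := B) p (hcardB ▸ dvd_pow_self p hm.ne')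
  let e : A ⧸ H ≃* zpowers z := mulEquivOfPrimeCardEq hquot ((Nat.card_zpowers z).trans hz)
  have : Nontrivial (A ⧸ H) := Finite.one_lt_card_iff_nontrivial.mp
    (hquot ▸ hp.one_lt)
  obtain ⟨q, hq⟩ := exists_ne (1 : A ⧸ H)
  obtain ⟨a, rfl⟩ := QuotientGroup.mk'_surjective H q
  refine ⟨(zpowers z).subtype.comp (e.toMonoidHom.comp (QuotientGroup.mk' H)), a, ?_⟩
  simpa using hq

section CentralShear

variable {A N : Type*} [Group N]

@[simps apply]
def MulEquiv.prodCentralShear [Group A] (f : A →* center N) : A × N ≃* A × N where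
  toFun q := (q.1, q.2 * f q.1)
  invFun q := (q.1, q.2 * (f q.1)⁻¹)
  left_inv q := by simp
  right_inv q := by simp
  map_mul' q r := by
    ext
    · rfl
    · simp only [Prod.snd_mul, Prod.fst_mul, map_mul, coe_mul, mul_assoc,
        (mem_center_iff.mp (f q.1).2 _).symm]

theorem sq_eq_one_of_forall_mulAut_commute [CommGroup A]
    (h : ∀ φ ψ : MulAut (A × N), φ * ψ = ψ * φ) (f : A →* center N) (a : A) : f a ^ 2 = 1 := by
  have hinv : (f a : N) = (f a)⁻¹ := by
    simpa [MulEquiv.prodCongr] using congr(($(h ((MulEquiv.inv A).prodCongr (MulEquiv.refl N))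
      (MulEquiv.prodCentralShear f)) (a, 1)).2)
  rw [pow_two, mul_eq_one_iff_eq_inv]
  exact Subtype.ext hinv

end CentralShear

/-- A Miller `p`-group, `p` odd, is purely non-abelian. -/
theorem miller_pGroup_purelyNonAbelian
    (p : ℕ) (hp : p.Prime) (hodd : Odd p)
    (G : Type u) [Group G] (hG : IsMiller G) (hpG : IsPGroup p G) :
    PurelyNonAbelian G := by
  intro A N _ _ hA ⟨e⟩ a
  by_contra ha
  have : Fact p.Prime := ⟨hp⟩
  obtain ⟨_, ⟨u, v, huv⟩, hcomm⟩ := hG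
  let : CommGroup A := { mul_comm := hA }
  have : Nontrivial A := nontrivial_of_ne a 1 ha
  have : Nontrivial N := by
    by_contra!
    exact huv (e.injective (Prod.ext (by simp [hA]) (Subsingleton.elim _ _)))
  have : Finite (A × N) := Finite.of_equiv G e
  have : Finite A := Finite.of_surjective (Prod.fst : A × N → A) Prod.fst_surjective
  have : Finite N := Finite.of_surjective (Prod.snd : A × N → N) Prod.snd_surjective
  have hpAN : IsPGroup p (A × N) := hpG.of_equiv e
  have hpA : IsPGroup p A := hpAN.of_surjective (MonoidHom.fst A N) Prod.fst_surjective
  have hpN : IsPGroup p N := hpAN.of_surjective (MonoidHom.snd A N) Prod.snd_surjective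
  have hpZ : IsPGroup p (center N) := hpN.to_subgroup _
  have : Nontrivial (center N) := hpN.center_nontrivial
  obtain ⟨f, b, hfb⟩ := hpA.exists_monoidHom_apply_ne_one hpZ
  have hcommAN : ∀ φ ψ : MulAut (A × N), φ * ψ = ψ * φ := fun φ ψ =>
    (MulAut.congr e).symm.injective (by simp only [map_mul, hcomm])
  have hsq := sq_eq_one_of_forall_mulAut_commute hcommAN f b
  exact hfb ((hpZ.powEquiv hodd.coprime_two_right).injective (hsq.trans (one_pow 2).symm))
end

section
/- Let p be a prime, let A be a non-trivial finite abelian p-group and let N be a finite purely non-abelian p-group. Then the direct product G = A × N is a Miller group if and only if: p = 2, A is cyclic of order 2^n for some n ≥ 2, and N is a special Miller 2-group. -/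
/-- A finite `p`-group is special if its center equals its commutator subgroup
and this common subgroup is elementary abelian. -/
def IsSpecial (p : ℕ) (G : Type*) [Group G] : Prop :=
  Subgroup.center G = commutator G ∧ ∀ x ∈ Subgroup.center G, x ^ p = 1

open Subgroup
open scoped commutatorElement

section IsCyclic

variable {A C : Type*} [Group A] [IsCyclic A] [Group C]

theorem IsCyclic.exists_monoidHom_apply_eq {c : C} (hc : c ^ Nat.card A = 1) :
    ∃ f : A →* C, ∃ a, f a = c := by
  obtain ⟨g, hg⟩ := IsCyclic.exists_generator (α := A)
  have hdvd : orderOf c ∣ orderOf g := by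
    rw [orderOf_eq_card_of_forall_mem_zpowers hg]
    exact orderOf_dvd_of_pow_eq_one hc
  exact ⟨monoidHomOfForallMemZpowers hg hdvd, g, monoidHomOfForallMemZpowers_apply_gen hg hdvd⟩

theorem IsCyclic.exists_sq_eq_of_sq_eq_one (h4 : 4 ∣ Nat.card A) {t : A} (ht : t ^ 2 = 1) :
    ∃ s, t = s ^ 2 := by
  obtain ⟨g, hg⟩ := IsCyclic.exists_generator (α := A)
  obtain ⟨j, rfl⟩ := mem_zpowers_iff.mp (hg t)
  have h4j : (4 : ℤ) ∣ 2 * j := by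
    refine (Int.natCast_dvd_natCast.mpr h4).trans ?_
    rw [← orderOf_eq_card_of_forall_mem_zpowers hg, orderOf_dvd_iff_zpow_eq_one, mul_comm,
      zpow_mul]
    exact_mod_cast ht
  obtain ⟨i, rfl⟩ : 2 ∣ j := by omega
  exact ⟨g ^ i, by rw [← zpow_natCast, ← zpow_mul, mul_comm]; rfl⟩

end IsCyclic

theorem zpow_eq_self_of_sq_eq_one {G : Type*} [Group G] {x : G} (hx : x ^ 2 = 1) {j : ℤ}
    (hj : Odd j) : x ^ j = x := by
  obtain ⟨t, rfl⟩ := hj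
  rw [zpow_add_one, zpow_mul, show x ^ (2 : ℤ) = 1 by exact_mod_cast hx, one_zpow, one_mul]

theorem sq_mul_pow_card_div_two_eq_one {A : Type*} [CommGroup A] (h4 : 4 ∣ Nat.card A) (s : A)
    {t : A} (ht : t ^ 2 = 1) : (s ^ 2 * t) ^ (Nat.card A / 2) = 1 := by
  obtain ⟨c, hc⟩ := h4
  rw [mul_pow, ← pow_mul, hc, show 4 * c / 2 = 2 * c by omega, pow_mul t, ht, one_pow, mul_one,
    show 2 * (2 * c) = Nat.card A by omega, pow_card_eq_one']

theorem CommGroup.exists_monoidHom_apply_ne_one {B C : Type*} [CommGroup B] [Finite B]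
    [CommGroup C] [IsCyclic C] [Finite C] (hBC : Monoid.exponent B ∣ Nat.card C) {b : B}
    (hb : b ≠ 1) : ∃ φ : B →* C, φ b ≠ 1 := by
  have : HasEnoughRootsOfUnity C (Monoid.exponent B) := by
    obtain ⟨g, hg⟩ := IsCyclic.exists_ofOrder_eq_natCard (α := C)
    refine ⟨⟨g ^ (Nat.card C / Monoid.exponent B), ?_⟩, ?_⟩
    · rw [IsPrimitiveRoot.iff_orderOf, ← hg]
      exact orderOf_pow_orderOf_div (by rw [hg]; exact Nat.card_pos.ne') (hg ▸ hBC)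
    · have : IsCyclic Cˣ := isCyclic_of_surjective toUnits toUnits.surjective
      exact Subgroup.isCyclic _
  obtain ⟨φ, hφ⟩ := CommGroup.exists_apply_ne_one_of_hasEnoughRootsOfUnity B C hb
  exact ⟨toUnits.symm.toMonoidHom.comp φ, by simpa using hφ⟩

theorem IsPGroup.exists_surjective_monoidHom {p : ℕ} [Fact p.Prime] {G C : Type*} [Group G]
    [Finite G] [Nontrivial G] [Group C] (hG : IsPGroup p G) (hC : Nat.card C = p) :
    ∃ φ : G →* C, Function.Surjective φ := by
  obtain ⟨k, hk⟩ := hG.exists_card_eq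
  have hk0 : k ≠ 0 := by
    rintro rfl
    exact (Finite.one_lt_card (α := G)).ne' (by simpa using hk)
  obtain ⟨K, hK⟩ := Sylow.exists_subgroup_card_pow_prime p (hk ▸ pow_dvd_pow p (Nat.sub_le k 1) :
    p ^ (k - 1) ∣ Nat.card G)
  have hindex : K.index = p := by
    have := K.card_mul_index
    rw [hK, hk, ← Nat.sub_add_cancel (Nat.one_le_iff_ne_zero.mpr hk0), pow_succ] at this
    exact (Nat.eq_of_mul_eq_mul_left (pow_pos (Fact.out : p.Prime).pos _) this)
  have : K.Normal := normal_of_index_eq_minFac_card <| by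
    rw [hindex, hk, Nat.Prime.pow_minFac Fact.out hk0]
  exact ⟨(mulEquivOfPrimeCardEq hindex hC).toMonoidHom.comp (QuotientGroup.mk' K),
    (mulEquivOfPrimeCardEq hindex hC).surjective.comp (QuotientGroup.mk'_surjective K)⟩

theorem IsPGroup.exists_mem_center_orderOf_eq {p : ℕ} [Fact p.Prime] {G : Type*} [Group G]
    [Finite G] [Nontrivial G] (hG : IsPGroup p G) : ∃ z ∈ center G, orderOf z = p := by
  have := hG.center_nontrivial
  have hdvd := ((hG.to_subgroup (center G)).card_eq_or_dvd).resolve_left Finite.one_lt_card.ne'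
  obtain ⟨z, hz⟩ := exists_prime_orderOf_dvd_card' p hdvd
  exact ⟨z, z.2, by rw [Subgroup.orderOf_coe, hz]⟩

theorem commutatorElement_mul_mem_center_left {G : Type*} [Group G] {c : G} (hc : c ∈ center G)
    (x y : G) : ⁅x * c, y⁆ = ⁅x, y⁆ := by
  rw [commutatorElement_def, commutatorElement_def, mul_inv_rev,
    show x * c * y * (c⁻¹ * x⁻¹) = x * (c * y * c⁻¹) * x⁻¹ by group, ← mem_center_iff.mp hc y,
    mul_inv_cancel_right]

theorem commutatorElement_mul_mem_center_s5 {G : Type*} [Group G] {c c' : G} (hc : c ∈ center G)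
    (hc' : c' ∈ center G) (x y : G) : ⁅x * c, y * c'⁆ = ⁅x, y⁆ := by
  rw [commutatorElement_mul_mem_center_left hc, ← commutatorElement_inv,
    commutatorElement_mul_mem_center_left hc', commutatorElement_inv]


theorem commutator_le_of_sup_center_eq_top {G : Type*} [Group G] {H : Subgroup G}
    (hH : H ⊔ center G = ⊤) : commutator G ≤ H := by
  have hdec (x : G) : ∃ y ∈ H, ∃ z ∈ center G, y * z = x :=
    mem_sup_of_normal_right.mp (hH ▸ mem_top x)
  rw [commutator_def, commutator_le]
  intro x _ x' _
  obtain ⟨y, hy, z, hz, rfl⟩ := hdec x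
  obtain ⟨y', hy', z', hz', rfl⟩ := hdec x'
  rw [commutatorElement_mul_mem_center_s5 hz hz', commutatorElement_def]
  exact mul_mem (mul_mem (mul_mem hy hy') (inv_mem hy)) (inv_mem hy')

theorem sq_mem_center_of_commutator_le_center {G : Type*} [Group G]
    (hG : commutator G ≤ center G) (hZ : ∀ z ∈ center G, z ^ 2 = 1) (x : G) :
    x ^ 2 ∈ center G := by
  refine mem_center_iff.mpr fun y ↦ ?_
  have hc : ⁅x, y⁆ ∈ center G := hG (commutator_mem_commutator (mem_top x) (mem_top y))
  have hconj : x * y * x⁻¹ = ⁅x, y⁆ * y := by rw [commutatorElement_def]; group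
  have : x ^ 2 * y * (x ^ 2)⁻¹ = ⁅x, y⁆ ^ 2 * y := by
    rw [sq, mul_inv_rev, show x * x * y * (x⁻¹ * x⁻¹) = x * (x * y * x⁻¹) * x⁻¹ by group, hconj,
      show x * (⁅x, y⁆ * y) * x⁻¹ = x * ⁅x, y⁆ * x⁻¹ * (x * y * x⁻¹) by group, hconj,
      mem_center_iff.mp hc x, mul_inv_cancel_right, sq, mul_assoc]
  rw [hZ _ hc, one_mul, mul_inv_eq_iff_eq_mul] at this
  exact this.symm

namespace MulAut

section

variable {G H : Type*} [Group G] [Group H]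

theorem mul_comm_of_mulEquiv (e : G ≃* H) (h : ∀ φ ψ : MulAut G, φ * ψ = ψ * φ)
    (φ ψ : MulAut H) : φ * ψ = ψ * φ := by
  obtain ⟨φ, rfl⟩ := (MulAut.congr e).surjective φ
  obtain ⟨ψ, rfl⟩ := (MulAut.congr e).surjective ψ
  rw [← map_mul, h, map_mul]

theorem mul_comm_left_of_prod (h : ∀ φ ψ : MulAut (G × H), φ * ψ = ψ * φ) (φ ψ : MulAut G) :
    φ * ψ = ψ * φ := by
  ext a
  exact congrArg (fun θ : MulAut (G × H) ↦ (θ (a, 1)).1)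
    (h (φ.prodCongr (MulEquiv.refl H)) (ψ.prodCongr (MulEquiv.refl H)))

theorem mul_comm_right_of_prod (h : ∀ φ ψ : MulAut (G × H), φ * ψ = ψ * φ) (φ ψ : MulAut H) :
    φ * ψ = ψ * φ := by
  ext n
  exact congrArg (fun θ : MulAut (G × H) ↦ (θ (1, n)).2)
    (h ((MulEquiv.refl G).prodCongr φ) ((MulEquiv.refl G).prodCongr ψ))

theorem prod_apply_eq_mul (σ : MulAut (G × H)) (x : G × H) :
    σ x = σ (x.1, 1) * σ (1, x.2) := by
  rw [← map_mul, Prod.mk_mul_mk, mul_one, one_mul]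

theorem commutator_le_center_of_mul_comm (h : ∀ φ ψ : MulAut G, φ * ψ = ψ * φ) :
    commutator G ≤ center G := by
  rw [commutator_def, commutator_le]
  intro x _ y _
  have hconj : MulAut.conj ⁅x, y⁆ = 1 := by
    rw [map_commutatorElement, commutatorElement_eq_one_iff_mul_comm, h]
  refine mem_center_iff.mpr fun g ↦ (mul_inv_eq_iff_eq_mul.mp ?_).symm
  exact congrArg (fun θ : MulAut G ↦ θ g) hconj

theorem inv_mul_apply_mem_center_of_mul_comm (h : ∀ φ ψ : MulAut G, φ * ψ = ψ * φ)
    (E : MulAut G) (x : G) : x⁻¹ * E x ∈ center G := by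
  refine mem_center_iff.mpr fun g ↦ ?_
  obtain ⟨g, rfl⟩ := E.surjective g
  have hg : E x * E g * (E x)⁻¹ = E (x * g * x⁻¹) := by simp
  have hcomm : E (x * g * x⁻¹) = x * E g * x⁻¹ := by
    simpa using congrArg (fun θ : MulAut G ↦ θ g) (h E (MulAut.conj x))
  calc E g * (x⁻¹ * E x) = x⁻¹ * (x * E g * x⁻¹) * E x := by group
    _ = x⁻¹ * (E x * E g * (E x)⁻¹) * E x := by rw [hg, hcomm]
    _ = x⁻¹ * E x * E g := by group

theorem apply_commutatorElement_of_mul_comm (h : ∀ φ ψ : MulAut G, φ * ψ = ψ * φ)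
    (E : MulAut G) (x y : G) : E ⁅x, y⁆ = ⁅x, y⁆ := by
  rw [map_commutatorElement, ← mul_inv_cancel_left x (E x), ← mul_inv_cancel_left y (E y),
    commutatorElement_mul_mem_center_s5 (inv_mul_apply_mem_center_of_mul_comm h E x)
      (inv_mul_apply_mem_center_of_mul_comm h E y)]

theorem apply_eq_self_of_mem_commutator_s5 (h : ∀ φ ψ : MulAut G, φ * ψ = ψ * φ)
    (E : MulAut G) {z : G} (hz : z ∈ commutator G) : E z = z := by
  rw [commutator_eq_closure] at hz
  induction hz using closure_induction with
  | mem _ hw => obtain ⟨x, y, rfl⟩ := hw; exact apply_commutatorElement_of_mul_comm h E x y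
  | one => exact map_one E
  | mul _ _ _ _ hv hw => rw [map_mul, hv, hw]
  | inv _ _ hv => rw [map_inv, hv]

end

section

variable {A N : Type*}

def shearRight [Group A] [Group N] (f : A →* center N) : MulAut (A × N) where
  toFun x := (x.1, f x.1 * x.2)
  invFun x := (x.1, (f x.1)⁻¹ * x.2)
  left_inv x := by simp
  right_inv x := by simp
  map_mul' x y := by
    ext
    · rfl
    · change (f (x.1 * y.1) : N) * (x.2 * y.2) = f x.1 * x.2 * (f y.1 * y.2)
      rw [map_mul, Subgroup.coe_mul, mul_assoc, mul_assoc, ← mul_assoc x.2,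
        mem_center_iff.mp (f y.1).2 x.2, mul_assoc]

@[simp]
theorem shearRight_apply [Group A] [Group N] (f : A →* center N) (x : A × N) :
    shearRight f x = (x.1, f x.1 * x.2) := rfl

variable [CommGroup A] [Group N]

def shearLeft (g : N →* A) : MulAut (A × N) where
  toFun x := (x.1 * g x.2, x.2)
  invFun x := (x.1 * (g x.2)⁻¹, x.2)
  left_inv x := by simp
  right_inv x := by simp
  map_mul' x y := by
    ext
    · simp only [Prod.fst_mul, Prod.snd_mul, map_mul]
      exact mul_mul_mul_comm _ _ _ _
    · rfl

@[simp]
theorem shearLeft_apply (g : N →* A) (x : A × N) : shearLeft g x = (x.1 * g x.2, x.2) := rfl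

variable (h : ∀ φ ψ : MulAut (A × N), φ * ψ = ψ * φ)
include h

theorem sq_eq_one_of_prod_mul_comm (f : A →* center N) (a : A) : f a ^ 2 = 1 := by
  have : (f a⁻¹ : N) * 1 = f a * 1 := congrArg (fun θ : MulAut (A × N) ↦ (θ (a, 1)).2)
    (h (shearRight f) ((MulEquiv.inv A).prodCongr (MulEquiv.refl N)))
  rw [mul_one, mul_one, map_inv] at this
  rw [sq, mul_eq_one_iff_eq_inv]
  exact Subtype.ext this.symm

theorem apply_apply_eq_one_of_prod_mul_comm (f : A →* center N) (g : N →* A) (a : A) :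
    g (f a) = 1 := by
  have := congrArg (fun θ : MulAut (A × N) ↦ (θ (a, 1)).1) (h (shearRight f) (shearLeft g))
  simpa using this.symm

theorem apply_apply_eq_one_of_prod_mul_comm' (f : A →* center N) (g : N →* A) (n : N) :
    f (g n) = 1 := by
  have := congrArg (fun θ : MulAut (A × N) ↦ (θ (1, n)).2) (h (shearRight f) (shearLeft g))
  simpa using this

end

theorem not_prod_mul_comm {C D : Type*} [CommGroup C] [IsCyclic C] [Finite C]
    [CommGroup D] [Finite D] [Nontrivial D] (hD : Monoid.exponent D ∣ Nat.card C) :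
    ¬ ∀ φ ψ : MulAut (C × D), φ * ψ = ψ * φ := by
  intro h
  obtain ⟨d, hd⟩ := exists_ne (1 : D)
  obtain ⟨g, hg⟩ := CommGroup.exists_monoidHom_apply_ne_one hD hd
  obtain ⟨f, c, hfc⟩ := IsCyclic.exists_monoidHom_apply_eq (A := C)
    (c := (⟨d, mem_center_iff.mpr fun _ ↦ mul_comm _ _⟩ : center D))
    (Subtype.ext (Monoid.exponent_dvd_iff_forall_pow_eq_one.mp hD d))
  exact hg (by simpa [hfc] using apply_apply_eq_one_of_prod_mul_comm h f g c)

end MulAut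

theorem IsPGroup.isCyclic_of_mulAut_mul_comm {p : ℕ} [Fact p.Prime] {A : Type*} [CommGroup A]
    [Finite A] (hA : IsPGroup p A) (h : ∀ φ ψ : MulAut A, φ * ψ = ψ * φ) : IsCyclic A := by
  classical
  obtain ⟨ι, _, n, hn, ⟨e⟩⟩ := CommGroup.equiv_prod_multiplicative_zmod_of_finite A
  have : ∀ k, NeZero (n k) := fun k ↦ ⟨(zero_lt_one.trans (hn k)).ne'⟩
  rcases isEmpty_or_nonempty ι with hι | hι
  · have : Subsingleton A := e.injective.subsingleton
    infer_instance
  let M k := Multiplicative (ZMod (n k))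
  have hcard k : Nat.card (M k) = n k := by simp [M]
  have hpow k : ∃ a, n k = p ^ a := hcard k ▸
    (hA.of_injective (e.symm.toMonoidHom.comp (MonoidHom.mulSingle M k))
      (e.symm.injective.comp (Pi.mulSingle_injective k))).exists_card_eq
  -- split off a cyclic factor of largest order; the orders of the others divide it
  obtain ⟨i, hi⟩ := Finite.exists_max n
  let e' : A ≃* M i × ∀ k : {k // k ≠ i}, M k :=
    e.trans { Equiv.piSplitAt i M with map_mul' := fun _ _ ↦ rfl }
  by_cases hD : Subsingleton (∀ k : {k // k ≠ i}, M k)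
  · refine isCyclic_of_surjective (e'.symm.toMonoidHom.comp (MonoidHom.inl _ _)) fun a ↦ ?_
    exact ⟨(e' a).1, e'.symm_apply_eq.mpr (Prod.ext rfl (Subsingleton.elim _ _))⟩
  · have : Nontrivial (∀ k : {k // k ≠ i}, M k) := not_subsingleton_iff_nontrivial.mp hD
    refine absurd (MulAut.mul_comm_of_mulEquiv e' h) (MulAut.not_prod_mul_comm ?_)
    refine Monoid.exponent_dvd_of_forall_pow_eq_one fun d ↦ funext fun k ↦ ?_
    have hki : n k ∣ n i := by
      obtain ⟨a, ha⟩ := hpow k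
      obtain ⟨b, hb⟩ := hpow i
      have := hi k
      rw [ha, hb] at this ⊢
      exact pow_dvd_pow p ((Nat.pow_le_pow_iff_right (Fact.out : p.Prime).one_lt).mp this)
    rw [Pi.pow_apply, Pi.one_apply, hcard i, ← orderOf_dvd_iff_pow_eq_one]
    exact (orderOf_dvd_natCard (d k)).trans (hcard k ▸ hki)

namespace MulAut

section

variable {A N : Type*} [CommGroup A] [IsCyclic A] [Group N]
  (h : ∀ φ ψ : MulAut (A × N), φ * ψ = ψ * φ)
include h

theorem sq_eq_one_of_mem_center {z : N}
    (hz : z ∈ center N) (hzA : z ^ Nat.card A = 1) : z ^ 2 = 1 := by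
  obtain ⟨f, a, hfa⟩ := IsCyclic.exists_monoidHom_apply_eq (A := A) (c := (⟨z, hz⟩ : center N))
    (Subtype.ext hzA)
  simpa [hfa] using congrArg Subtype.val (sq_eq_one_of_prod_mul_comm h f a)

section

variable [Finite N] [Nontrivial N] {p : ℕ} [Fact p.Prime] (hN : IsPGroup p N)
include hN

theorem prime_eq_two [Finite A] [Nontrivial A] (hA : IsPGroup p A) : p = 2 := by
  obtain ⟨z, hz, hzp⟩ := hN.exists_mem_center_orderOf_eq
  have hpA := hA.card_eq_or_dvd.resolve_left Finite.one_lt_card.ne'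
  have hz2 := sq_eq_one_of_mem_center h hz (orderOf_dvd_iff_pow_eq_one.mp (hzp ▸ hpA))
  exact (Nat.prime_dvd_prime_iff_eq Fact.out Nat.prime_two).mp (hzp ▸ orderOf_dvd_of_pow_eq_one hz2)

theorem card_ne_prime : Nat.card A ≠ p := by
  intro hAp
  obtain ⟨z, hz, hzp⟩ := hN.exists_mem_center_orderOf_eq
  obtain ⟨g, hg⟩ := hN.exists_surjective_monoidHom hAp
  obtain ⟨f, a, hfa⟩ := IsCyclic.exists_monoidHom_apply_eq (A := A) (c := (⟨z, hz⟩ : center N))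
    (Subtype.ext (by simp [hAp, ← hzp, pow_orderOf_eq_one]))
  obtain ⟨n, rfl⟩ := hg a
  have := apply_apply_eq_one_of_prod_mul_comm' h f g n
  rw [hfa, Subtype.ext_iff] at this
  exact (Fact.out : p.Prime).one_lt.ne' (hzp ▸ orderOf_eq_one_iff.mpr this)

end

theorem four_dvd_card [Finite A] [Nontrivial A] [Finite N] [Nontrivial N] (hA : IsPGroup 2 A)
    (hN : IsPGroup 2 N) : 4 ∣ Nat.card A := by
  obtain ⟨n, hn⟩ := hA.exists_card_eq
  have h0 : n ≠ 0 := by rintro rfl; exact Finite.one_lt_card.ne' (hn.trans (pow_zero 2))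
  have h1 : n ≠ 1 := by rintro rfl; exact card_ne_prime h hN hn
  exact hn ▸ pow_dvd_pow 2 (by omega : 2 ≤ n)

theorem sq_eq_one_of_mem_center_of_isPGroup_two (hN : IsPGroup 2 N) (h4 : 4 ∣ Nat.card A)
    {z : N} (hz : z ∈ center N) : z ^ 2 = 1 := by
  obtain ⟨m, hm⟩ := IsPGroup.iff_orderOf.mp hN z
  by_contra hz2
  have hm2 : 2 ≤ m := by
    by_contra! hm2
    refine hz2 (orderOf_dvd_iff_pow_eq_one.mp ?_)
    exact hm ▸ (pow_dvd_pow 2 (by omega : m ≤ 1)).trans (by norm_num)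
  have hy4 : (z ^ 2 ^ (m - 2)) ^ 4 = 1 := by
    rw [← pow_mul, show 2 ^ (m - 2) * 4 = orderOf z by
      rw [hm, show 4 = 2 ^ 2 by rfl, ← pow_add, Nat.sub_add_cancel hm2]]
    exact pow_orderOf_eq_one z
  have hyA : (z ^ 2 ^ (m - 2)) ^ Nat.card A = 1 := by
    obtain ⟨k, hk⟩ := h4
    rw [hk, pow_mul, hy4, one_pow]
  have hy2 := sq_eq_one_of_mem_center h (pow_mem hz _) hyA
  rw [← pow_mul, ← pow_succ, show m - 2 + 1 = m - 1 by omega] at hy2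
  refine pow_ne_one_of_lt_orderOf (by positivity) ?_ hy2
  rw [hm]
  exact Nat.pow_lt_pow_right one_lt_two (by omega)

theorem center_le_commutator [Finite A] [Finite N] (h4 : 4 ∣ Nat.card A)
    (hZ : ∀ z ∈ center N, z ^ 2 = 1) : center N ≤ commutator N := by
  intro z hz
  by_contra hz'
  -- a character `g : N → A` detects `z`, contradicting `g ∘ f = 1` for `f : A → Z(N)` hitting `z`
  have hsq := sq_mem_center_of_commutator_le_center
    (commutator_le_center_of_mul_comm (mul_comm_right_of_prod h)) hZ
  have hexp : Monoid.exponent (Abelianization N) ∣ Nat.card A := by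
    refine (Monoid.exponent_dvd_of_forall_pow_eq_one fun b ↦ ?_).trans h4
    obtain ⟨x, rfl⟩ : ∃ x, Abelianization.of x = b := QuotientGroup.mk_surjective b
    rw [← map_pow, show 4 = 2 * 2 by rfl, pow_mul, hZ _ (hsq x), map_one]
  obtain ⟨g, hg⟩ := CommGroup.exists_monoidHom_apply_ne_one hexp (b := Abelianization.of z)
    (by rwa [Ne, ← MonoidHom.mem_ker, Abelianization.ker_of])
  have hzA : z ^ Nat.card A = 1 := by
    obtain ⟨k, hk⟩ := h4
    rw [hk, show 4 * k = 2 * (2 * k) by ring, pow_mul, hZ z hz, one_pow]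
  obtain ⟨f, a, hfa⟩ := IsCyclic.exists_monoidHom_apply_eq (A := A) (c := (⟨z, hz⟩ : center N))
    (Subtype.ext hzA)
  exact hg (by
    simpa [hfa] using apply_apply_eq_one_of_prod_mul_comm h f (g.comp Abelianization.of) a)

end

section

variable {A N : Type*} [CommGroup A] [Group N]

theorem snd_apply_inl_mem_center (σ : MulAut (A × N)) (a : A) : (σ (a, 1)).2 ∈ center N := by
  have ha : ((a, 1) : A × N) ∈ center (A × N) := by
    rw [Subgroup.center_prod]
    exact ⟨mem_center_iff.mpr fun _ ↦ mul_comm _ _, one_mem _⟩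
  have hσa : σ (a, 1) ∈ center (A × N) := mem_center_iff.mpr fun y ↦ by
    obtain ⟨w, rfl⟩ := σ.surjective y
    rw [← map_mul, ← map_mul, mem_center_iff.mp ha w]
  rw [Subgroup.center_prod] at hσa
  exact hσa.2

theorem fst_apply_inr_eq_one_of_mem_commutator (σ : MulAut (A × N)) {n : N}
    (hn : n ∈ commutator N) : (σ (1, n)).1 = 1 :=
  Abelianization.commutator_subset_ker
    ((MonoidHom.fst A N).comp (σ.toMonoidHom.comp (MonoidHom.inr A N))) hn

theorem exists_mulAut_eq_snd_apply_inr [Finite N] (hN : center N ≤ commutator N)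
    (σ : MulAut (A × N)) : ∃ δ : MulAut N, ∀ n, δ n = (σ (1, n)).2 := by
  set δ := (MonoidHom.snd A N).comp (σ.toMonoidHom.comp (MonoidHom.inr A N))
  have hsup : δ.range ⊔ center N = ⊤ := by
    refine eq_top_iff.mpr fun m _ ↦ ?_
    set x := σ.symm (1, m)
    have hm : m = (σ (x.1, 1)).2 * (σ (1, x.2)).2 := by
      simpa [x] using congrArg Prod.snd (prod_apply_eq_mul σ x)
    rw [hm, ← mem_center_iff.mp (snd_apply_inl_mem_center σ _)]
    exact mul_mem (mem_sup_left ⟨_, rfl⟩) (mem_sup_right (snd_apply_inl_mem_center σ _))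
  have hsurj : Function.Surjective δ := by
    rw [← MonoidHom.range_eq_top, eq_top_iff, ← hsup]
    exact sup_le le_rfl (hN.trans (commutator_le_of_sup_center_eq_top hsup))
  exact ⟨MulEquiv.ofBijective δ ⟨Finite.injective_iff_surjective.mpr hsurj, hsurj⟩, fun _ ↦ rfl⟩

theorem fst_apply_inr_sq_eq_one (hN : IsSpecial 2 N) (σ : MulAut (A × N)) (n : N) :
    (σ (1, n)).1 ^ 2 = 1 := by
  have hn : n ^ 2 ∈ commutator N := hN.1 ▸ sq_mem_center_of_commutator_le_center hN.1.ge hN.2 n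
  calc (σ (1, n)).1 ^ 2 = (σ ((1, n) ^ 2)).1 := by rw [map_pow]; rfl
    _ = 1 := by rw [Prod.pow_mk, one_pow]; exact fst_apply_inr_eq_one_of_mem_commutator σ hn

theorem apply_inl_zpow_of_odd (hN : IsSpecial 2 N) (σ : MulAut (A × N)) {j : ℤ} (hj : Odd j)
    (a : A) : σ (a ^ j, 1) = ((σ (a, 1)).1 ^ j, (σ (a, 1)).2) := by
  rw [show ((a ^ j, 1) : A × N) = (a, 1) ^ j by simp, map_zpow]
  exact Prod.ext rfl (zpow_eq_self_of_sq_eq_one (hN.2 _ (snd_apply_inl_mem_center σ a)) hj)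

theorem apply_inr_eq_self_of_mem_center [Finite N] (hN : IsSpecial 2 N)
    (hAutN : ∀ φ ψ : MulAut N, φ * ψ = ψ * φ) (σ : MulAut (A × N)) {z : N}
    (hz : z ∈ center N) : σ (1, z) = (1, z) := by
  obtain ⟨δ, hδ⟩ := exists_mulAut_eq_snd_apply_inr hN.1.le σ
  have hz' : z ∈ commutator N := hN.1 ▸ hz
  refine Prod.ext (fst_apply_inr_eq_one_of_mem_commutator σ hz') ?_
  rw [← hδ]
  exact apply_eq_self_of_mem_commutator_s5 hAutN δ hz'

theorem fst_apply_inr_apply [Finite N] (hN : IsSpecial 2 N)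
    (hAutN : ∀ φ ψ : MulAut N, φ * ψ = ψ * φ) (σ : MulAut (A × N)) (E : MulAut N) (n : N) :
    (σ (1, E n)).1 = (σ (1, n)).1 := by
  have hc := inv_mul_apply_mem_center_of_mul_comm hAutN E n
  rw [← mul_inv_cancel_left n (E n), ← one_mul (1 : A), ← Prod.mk_mul_mk, map_mul, Prod.fst_mul,
    apply_inr_eq_self_of_mem_center hN hAutN σ hc, mul_one, one_mul]

section Special

variable [IsCyclic A] (h4 : 4 ∣ Nat.card A) (hN : IsSpecial 2 N)

include h4 hN in
theorem snd_apply_inl_eq_one_of_sq_eq_one (σ : MulAut (A × N)) {t : A} (ht : t ^ 2 = 1) :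
    (σ (t, 1)).2 = 1 := by
  obtain ⟨s, rfl⟩ := IsCyclic.exists_sq_eq_of_sq_eq_one h4 ht
  calc (σ (s ^ 2, 1)).2 = (σ (s, 1)).2 ^ 2 := by
        rw [show ((s ^ 2, 1) : A × N) = (s, 1) ^ 2 by simp, map_pow]; rfl
    _ = 1 := hN.2 _ (snd_apply_inl_mem_center σ s)

variable [Finite A]

include h4 hN in
theorem exists_odd_fst_apply_inl (σ : MulAut (A × N)) :
    ∃ k : ℤ, Odd k ∧ ∀ a, (σ (a, 1)).1 = a ^ k := by
  obtain ⟨k, hk⟩ := ((MonoidHom.fst A N).comp (σ.toMonoidHom.comp (MonoidHom.inl A N))).map_cyclic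
  have hk' : ∀ a, (σ (a, 1)).1 = a ^ k := hk
  -- for even `k` a generator of `A` is a square times an involution, so `|A| / 2` kills it
  refine ⟨k, Int.not_even_iff_odd.mp fun ⟨t, ht⟩ ↦ ?_, hk'⟩
  obtain ⟨g, hg⟩ := IsCyclic.exists_ofOrder_eq_natCard (α := A)
  set x := σ.symm (g, 1)
  have hgx : g = (x.1 ^ t) ^ 2 * (σ (1, x.2)).1 := by
    simpa [x, hk', ht, zpow_add, sq] using congrArg Prod.fst (prod_apply_eq_mul σ x)
  have hhalf := sq_mul_pow_card_div_two_eq_one h4 (x.1 ^ t) (fst_apply_inr_sq_eq_one hN σ x.2)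
  rw [← hgx] at hhalf
  have hpos : 0 < Nat.card A := Nat.card_pos
  exact pow_ne_one_of_lt_orderOf (by omega) (by rw [hg]; omega) hhalf

include h4 hN in
theorem apply_inl_eq_self_of_sq_eq_one (σ : MulAut (A × N)) {t : A} (ht : t ^ 2 = 1) :
    σ (t, 1) = (t, 1) := by
  obtain ⟨k, hk, hσ⟩ := exists_odd_fst_apply_inl h4 hN σ
  exact Prod.ext (by rw [hσ, zpow_eq_self_of_sq_eq_one ht hk])
    (snd_apply_inl_eq_one_of_sq_eq_one h4 hN σ ht)

variable [Finite N] (hAutN : ∀ φ ψ : MulAut N, φ * ψ = ψ * φ)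
include h4 hN hAutN

theorem apply_apply_inl_comm (σ τ : MulAut (A × N)) (a : A) : σ (τ (a, 1)) = τ (σ (a, 1)) := by
  obtain ⟨k, hk, hσ⟩ := exists_odd_fst_apply_inl h4 hN σ
  obtain ⟨k', hk', hτ⟩ := exists_odd_fst_apply_inl h4 hN τ
  rw [prod_apply_eq_mul σ, prod_apply_eq_mul τ (σ (a, 1)),
    apply_inr_eq_self_of_mem_center hN hAutN σ (snd_apply_inl_mem_center τ a),
    apply_inr_eq_self_of_mem_center hN hAutN τ (snd_apply_inl_mem_center σ a), hσ, hτ,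
    apply_inl_zpow_of_odd hN σ hk', apply_inl_zpow_of_odd hN τ hk, hσ, hτ, ← zpow_mul,
    ← zpow_mul, mul_comm k]
  exact Prod.ext rfl (mem_center_iff.mp (snd_apply_inl_mem_center τ a) _)

theorem apply_apply_inr_comm (σ τ : MulAut (A × N)) (n : N) : σ (τ (1, n)) = τ (σ (1, n)) := by
  obtain ⟨δ, hδ⟩ := exists_mulAut_eq_snd_apply_inr hN.1.le σ
  obtain ⟨δ', hδ'⟩ := exists_mulAut_eq_snd_apply_inr hN.1.le τ
  rw [prod_apply_eq_mul σ, prod_apply_eq_mul τ (σ (1, n)),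
    apply_inl_eq_self_of_sq_eq_one h4 hN σ (fst_apply_inr_sq_eq_one hN τ n),
    apply_inl_eq_self_of_sq_eq_one h4 hN τ (fst_apply_inr_sq_eq_one hN σ n)]
  refine Prod.ext ?_ ?_
  · simp only [Prod.fst_mul]
    rw [← hδ', ← hδ, fst_apply_inr_apply hN hAutN, fst_apply_inr_apply hN hAutN, mul_comm]
  · simp only [Prod.snd_mul, one_mul]
    rw [← hδ', ← hδ, ← hδ, ← hδ', ← MulAut.mul_apply, hAutN, MulAut.mul_apply]

theorem prod_mul_comm_of_isSpecial (σ τ : MulAut (A × N)) : σ * τ = τ * σ := by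
  ext x : 1
  rw [MulAut.mul_apply, MulAut.mul_apply, prod_apply_eq_mul τ x, prod_apply_eq_mul σ x, map_mul,
    map_mul, apply_apply_inl_comm h4 hN hAutN, apply_apply_inr_comm h4 hN hAutN]

end Special

end

end MulAut

theorem miller_direct_product_abelian_factor_general
    (p : ℕ) (hp : p.Prime)
    (A : Type u) [Group A] [Finite A] (habA : ∀ a b : A, a * b = b * a)
    (hntA : ∃ a : A, a ≠ 1) (hpA : IsPGroup p A)
    (N : Type u) [Group N] [Finite N] (hpN : IsPGroup p N) :
    IsMiller (A × N) ↔
      p = 2 ∧ IsCyclic A ∧ (∃ n : ℕ, 2 ≤ n ∧ Nat.card A = 2 ^ n) ∧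
        IsSpecial 2 N ∧ IsMiller N := by
  have : Fact p.Prime := ⟨hp⟩
  let : CommGroup A := { ‹Group A› with mul_comm := habA }
  have : Nontrivial A := let ⟨a, ha⟩ := hntA; nontrivial_of_ne a 1 ha
  constructor
  · rintro ⟨-, ⟨x, y, hxy⟩, h⟩
    have hNab : ∃ a b : N, a * b ≠ b * a := ⟨x.2, y.2, fun e ↦ hxy (Prod.ext (habA _ _) e)⟩
    have : Nontrivial N := by
      obtain ⟨a, b, hab⟩ := hNab
      exact nontrivial_of_ne a 1 (by rintro rfl; simp at hab)
    have hcyc : IsCyclic A := hpA.isCyclic_of_mulAut_mul_comm (MulAut.mul_comm_left_of_prod h)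
    obtain rfl := MulAut.prime_eq_two h hpN hpA
    have h4 := MulAut.four_dvd_card h hpA hpN
    obtain ⟨n, hn⟩ := hpA.exists_card_eq
    have hZ z (hz : z ∈ center N) := MulAut.sq_eq_one_of_mem_center_of_isPGroup_two h hpN h4 hz
    have hAutN := MulAut.mul_comm_right_of_prod h
    exact ⟨rfl, hcyc, ⟨n, (Nat.pow_dvd_pow_iff_le_right one_lt_two).mp (hn ▸ h4), hn⟩,
      ⟨le_antisymm (MulAut.center_le_commutator h h4 hZ)
        (MulAut.commutator_le_center_of_mul_comm hAutN), hZ⟩, inferInstance, hNab, hAutN⟩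
  · rintro ⟨rfl, hcyc, ⟨n, hn2, hn⟩, hN, -, ⟨x, y, hxy⟩, hAutN⟩
    exact ⟨inferInstance, ⟨(1, x), (1, y), fun e ↦ hxy (congrArg Prod.snd e)⟩,
      MulAut.prod_mul_comm_of_isSpecial (hn ▸ pow_dvd_pow 2 hn2) hN hAutN⟩

/-- Earnley's theorem: for `A ≠ 1` a finite abelian `p`-group and `N` a finite purely
non-abelian `p`-group, `A × N` is a Miller group iff `p = 2`, `A` is cyclic of order
`2^n` with `n ≥ 2`, and `N` is a special Miller `2`-group. -/
theorem miller_direct_product_abelian_factor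
    (p : ℕ) (hp : p.Prime)
    (A : Type u) [Group A] [Finite A] (habA : ∀ a b : A, a * b = b * a)
    (hntA : ∃ a : A, a ≠ 1) (hpA : IsPGroup p A)
    (N : Type u) [Group N] [Finite N] (hpN : IsPGroup p N)
    (hpna : PurelyNonAbelian N) :
    IsMiller (A × N) ↔
      p = 2 ∧ IsCyclic A ∧ (∃ n : ℕ, 2 ≤ n ∧ Nat.card A = 2 ^ n) ∧
        IsSpecial 2 N ∧ IsMiller N :=
  miller_direct_product_abelian_factor_general p hp A habA hntA hpA N hpN
end

section
/- If p is a prime and G is a Miller p-group, then the exponent of G is greater than p; that is, there exists x ∈ G with x^p ≠ 1. -/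
open Subgroup
open scoped commutatorElement

section

variable {G : Type*} [Group G]

theorem MulAut.conj_eq_one_iff {g : G} : MulAut.conj g = 1 ↔ g ∈ center G := by
  rw [mem_center_iff, DFunLike.ext_iff]
  exact forall_congr' fun x => by
    rw [MulAut.conj_apply, MulAut.one_apply, mul_inv_eq_iff_eq_mul, eq_comm]

theorem MulAut.conj_map_eq_mul_conj_mul_inv (f : MulAut G) (g : G) :
    MulAut.conj (f g) = f * MulAut.conj g * f⁻¹ := by
  ext x; simp

theorem commutatorElement_mem_center_of_commute_conj {g h : G}
    (hgh : Commute (MulAut.conj g) (MulAut.conj h)) : ⁅g, h⁆ ∈ center G := by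
  rwa [← MulAut.conj_eq_one_iff, map_commutatorElement, commutatorElement_eq_one_iff_commute]

theorem inv_mul_mem_center_of_commute_conj (f : MulAut G) {g : G}
    (hf : Commute f (MulAut.conj g)) : g⁻¹ * f g ∈ center G := by
  rw [← MulAut.conj_eq_one_iff, map_mul, MulAut.conj_map_eq_mul_conj_mul_inv, hf.eq,
    mul_inv_cancel_right, map_inv, inv_mul_cancel]

theorem commutatorElement_eq_one_of_mem_center_right (a : G) {z : G} (hz : z ∈ center G) :
    ⁅a, z⁆ = 1 :=
  commutatorElement_eq_one_iff_mul_comm.mpr (mem_center_iff.mp hz a)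

theorem commutatorElement_eq_one_of_mem_center_left {z : G} (hz : z ∈ center G) (a : G) :
    ⁅z, a⁆ = 1 :=
  commutatorElement_eq_one_iff_mul_comm.mpr (mem_center_iff.mp hz a).symm

theorem commutatorElement_mul_left_of_forall_mem_center (hc : ∀ g h : G, ⁅g, h⁆ ∈ center G)
    (a b c : G) : ⁅a * b, c⁆ = ⁅a, c⁆ * ⁅b, c⁆ := by
  rw [commutatorElement_mul_left_eq_conj_mul, mem_center_iff.mp (hc b c), mul_inv_cancel_right,
    mem_center_iff.mp (hc b c)]

theorem commutatorElement_mul_right_of_forall_mem_center (hc : ∀ g h : G, ⁅g, h⁆ ∈ center G)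
    (a b c : G) : ⁅a, b * c⁆ = ⁅a, b⁆ * ⁅a, c⁆ := by
  rw [commutatorElement_mul_right_eq_mul_conj, mul_assoc ⁅a, b⁆ b, mem_center_iff.mp (hc a c) b,
    ← mul_assoc, mul_inv_cancel_right]

/-- Baer's addition; `k` plays the role of `1 / 2` on commutators. -/
abbrev baerAddCommGroup (k : ℕ) (hc : ∀ g h : G, ⁅g, h⁆ ∈ center G)
    (hk : ∀ g h : G, ⁅g, h⁆ ^ (2 * k) = ⁅g, h⁆) : AddCommGroup G where
  add x y := x * y * ⁅y, x⁆ ^ k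
  zero := 1
  neg x := x⁻¹
  add_assoc x y z := by
    show x * y * ⁅y, x⁆ ^ k * z * ⁅z, x * y * ⁅y, x⁆ ^ k⁆ ^ k
      = x * (y * z * ⁅z, y⁆ ^ k) * ⁅y * z * ⁅z, y⁆ ^ k, x⁆ ^ k
    have hyx := pow_mem (hc y x) k
    have hzy := pow_mem (hc z y) k
    rw [commutatorElement_mul_right_of_forall_mem_center hc,
      commutatorElement_mul_right_of_forall_mem_center hc,
      commutatorElement_eq_one_of_mem_center_right _ hyx, mul_one,
      commutatorElement_mul_left_of_forall_mem_center hc,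
      commutatorElement_mul_left_of_forall_mem_center hc,
      commutatorElement_eq_one_of_mem_center_left hzy, mul_one,
      Commute.mul_pow (mem_center_iff.mp (hc z y) _),
      Commute.mul_pow (mem_center_iff.mp (hc z x) _),
      mul_assoc (x * y), ← mem_center_iff.mp hyx z]
    simp only [mul_assoc]
    rw [← mem_center_iff.mp hzy, mul_assoc]
  zero_add x := by
    show 1 * x * ⁅x, 1⁆ ^ k = x
    simp
  add_zero x := by
    show x * 1 * ⁅1, x⁆ ^ k = x
    simp
  neg_add_cancel x := by
    show x⁻¹ * x * ⁅x, x⁻¹⁆ ^ k = 1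
    simp [commutatorElement_def]
  add_comm x y := by
    show x * y * ⁅y, x⁆ ^ k = y * x * ⁅x, y⁆ ^ k
    have hxy : x * y = y * x * ⁅x, y⁆ := by
      rw [mem_center_iff.mp (hc x y), commutatorElement_def]; group
    rw [hxy, mul_assoc, ← commutatorElement_inv, inv_pow, mul_right_inj, inv_mul_eq_iff_eq_mul,
      eq_mul_inv_iff_mul_eq, ← pow_add, ← two_mul, hk]
  nsmul n x := x ^ n
  nsmul_zero := pow_zero
  nsmul_succ n x := by
    show x ^ (n + 1) = x ^ n * x * ⁅x, x ^ n⁆ ^ k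
    rw [(Commute.self_pow x n).commutator_eq, one_pow, mul_one, pow_succ]
  zsmul n x := x ^ n
  zsmul_zero' := zpow_zero
  zsmul_succ' n x := by
    show x ^ ((n : ℤ) + 1) = x ^ (n : ℤ) * x * ⁅x, x ^ (n : ℤ)⁆ ^ k
    rw [(Commute.self_zpow x n).commutator_eq, one_pow, mul_one, zpow_add_one]
  zsmul_neg' n x := by
    show x ^ Int.negSucc n = (x ^ ((n.succ : ℕ) : ℤ))⁻¹
    rw [zpow_negSucc, zpow_natCast]

theorem exists_retraction_center_of_exponent {p k : ℕ} [Fact p.Prime]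
    (hexp : ∀ x : G, x ^ p = 1) (hc : ∀ g h : G, ⁅g, h⁆ ∈ center G)
    (hk : ∀ g h : G, ⁅g, h⁆ ^ (2 * k) = ⁅g, h⁆) :
    ∃ π : G → G, (∀ x, π x ∈ center G) ∧ (∀ z ∈ center G, π z = z) ∧
      ∀ x y, π (x * y) = π x * π y * ⁅x, y⁆ ^ k := by
  let _ := baerAddCommGroup k hc hk
  let _ : Module (ZMod p) G := AddCommGroup.zmodModule (n := p) hexp
  have add_of_mem_center {x z : G} (hz : z ∈ center G) : x + z = x * z := by
    show x * z * ⁅z, x⁆ ^ k = x * z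
    rw [commutatorElement_eq_one_of_mem_center_left hz, one_pow, mul_one]
  obtain ⟨Z, hZ⟩ : ∃ Z : Submodule (ZMod p) G, ∀ x, x ∈ Z ↔ x ∈ center G :=
    ⟨{ carrier := center G
       add_mem' := fun {a b} ha hb => mul_mem (mul_mem ha hb) (pow_mem (hc b a) k)
       zero_mem' := one_mem _
       smul_mem' := fun c x hx => by
         rw [← ZMod.natCast_zmod_val c, Nat.cast_smul_eq_nsmul]
         exact pow_mem hx _ }, fun _ => Iff.rfl⟩
  obtain ⟨π, hπ⟩ := LinearMap.exists_leftInverse_of_injective Z.subtype Z.ker_subtype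
  have hπ_center {z : G} (hz : z ∈ center G) : (π z : G) = z :=
    congrArg Subtype.val (LinearMap.congr_fun hπ ⟨z, (hZ z).mpr hz⟩)
  refine ⟨fun x => π x, fun x => (hZ _).mp (π x).2, fun z => hπ_center, fun x y => ?_⟩
  have hw : ⁅x, y⁆ ^ k ∈ center G := pow_mem (hc x y) k
  have hxy : x * y = x + y + ⁅x, y⁆ ^ k := by
    rw [add_of_mem_center hw]
    show x * y = x * y * ⁅y, x⁆ ^ k * ⁅x, y⁆ ^ k
    rw [← commutatorElement_inv, inv_pow, inv_mul_cancel_right]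
  simp only [hxy, map_add, Submodule.coe_add, hπ_center hw]
  rw [add_of_mem_center hw, add_of_mem_center ((hZ _).mp (π y).2)]

structure IsCommutatorQuadratic (c : G → G) : Prop where
  mem_center (x : G) : c x ∈ center G
  apply_of_mem_center {z : G} (hz : z ∈ center G) : c z = z ^ 2
  map_mul (x y : G) : c (x * y) = c x * c y * ⁅x, y⁆

namespace IsCommutatorQuadratic

variable {c : G → G}

theorem commutatorElement_mem_center (hq : IsCommutatorQuadratic c) (x y : G) :
    ⁅x, y⁆ ∈ center G := by
  have h := hq.map_mul x y
  rw [← inv_mul_eq_iff_eq_mul] at h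
  exact h ▸ mul_mem (inv_mem (mul_mem (hq.mem_center x) (hq.mem_center y))) (hq.mem_center _)

theorem map_inv (hq : IsCommutatorQuadratic c) (x : G) : c x⁻¹ = (c x)⁻¹ := by
  have h := hq.map_mul x x⁻¹
  rw [mul_inv_cancel, hq.apply_of_mem_center (one_mem _), one_pow, commutatorElement_def,
    mul_inv_cancel_right, mul_inv_cancel, mul_one] at h
  exact eq_inv_of_mul_eq_one_right h.symm

theorem involutive_inv_mul (hq : IsCommutatorQuadratic c) :
    Function.Involutive fun x => x⁻¹ * c x := by
  intro x
  simp only [hq.map_mul, hq.map_inv, hq.apply_of_mem_center (hq.mem_center x),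
    commutatorElement_eq_one_of_mem_center_right _ (hq.mem_center x), mul_inv_rev, inv_inv,
    mul_one, pow_two, inv_mul_cancel_left, mul_assoc]
  rw [mem_center_iff.mp (hq.mem_center x) x, inv_mul_cancel_left]

def mulAut (hq : IsCommutatorQuadratic c) : MulAut G where
  toFun x := x⁻¹ * c x
  invFun x := x⁻¹ * c x
  left_inv := hq.involutive_inv_mul.leftInverse
  right_inv := hq.involutive_inv_mul.rightInverse
  map_mul' x y := by
    have e1 : x⁻¹ * c x * (y⁻¹ * c y) = x⁻¹ * y⁻¹ * (c x * c y) := by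
      rw [mul_assoc x⁻¹, ← mul_assoc (c x), ← mem_center_iff.mp (hq.mem_center x) y⁻¹]
      simp only [mul_assoc]
    have e2 : y⁻¹ * x⁻¹ * (c x * c y * ⁅x, y⁆) = y⁻¹ * x⁻¹ * ⁅x, y⁆ * (c x * c y) := by
      rw [mem_center_iff.mp (hq.commutatorElement_mem_center x y)]
      simp only [mul_assoc]
    have e3 : y⁻¹ * x⁻¹ * ⁅x, y⁆ = x⁻¹ * y⁻¹ := by
      rw [commutatorElement_def]; group
    show (x * y)⁻¹ * c (x * y) = x⁻¹ * c x * (y⁻¹ * c y)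
    rw [hq.map_mul, mul_inv_rev, e2, e3, e1]

theorem mulAut_apply (hq : IsCommutatorQuadratic c) (x : G) : hq.mulAut x = x⁻¹ * c x := rfl

end IsCommutatorQuadratic

theorem exists_isCommutatorQuadratic {p : ℕ} [hp : Fact p.Prime] (hp2 : p ≠ 2)
    (hexp : ∀ x : G, x ^ p = 1) (hc : ∀ g h : G, ⁅g, h⁆ ∈ center G) :
    ∃ c : G → G, IsCommutatorQuadratic c := by
  obtain ⟨m, hm⟩ := hp.out.odd_of_ne_two hp2
  have hk (g h : G) : ⁅g, h⁆ ^ (2 * (m + 1)) = ⁅g, h⁆ := by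
    rw [show 2 * (m + 1) = p + 1 by omega, pow_succ, hexp, one_mul]
  obtain ⟨π, hπ_mem, hπ_center, hπ_mul⟩ := exists_retraction_center_of_exponent hexp hc hk
  refine ⟨fun x => π x ^ 2, fun x => pow_mem (hπ_mem x) 2, fun hz => by rw [hπ_center _ hz],
    fun x y => ?_⟩
  rw [hπ_mul, Commute.mul_pow (mem_center_iff.mp (pow_mem (hc x y) (m + 1)) _),
    Commute.mul_pow (mem_center_iff.mp (hπ_mem y) _), ← pow_mul, mul_comm (m + 1), hk]

theorem mul_comm_of_exponent_prime_of_commute_mulAut {p : ℕ} (hp : p.Prime)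
    (hexp : ∀ x : G, x ^ p = 1) (hA : ∀ φ ψ : MulAut G, Commute φ ψ) (a b : G) :
    a * b = b * a := by
  rcases eq_or_ne p 2 with rfl | hp2
  · exact Commute.of_orderOf_dvd_two (fun g => orderOf_dvd_of_pow_eq_one (hexp g)) a b
  have := Fact.mk hp
  obtain ⟨c, hq⟩ := exists_isCommutatorQuadratic hp2 hexp
    fun g h => commutatorElement_mem_center_of_commute_conj (hA _ _)
  -- `hq.mulAut` inverts `b` modulo the centre, and fixes it modulo the centre as it commutes
  -- with `MulAut.conj b`.
  have hsq : b ^ 2 ∈ center G := by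
    have h := inv_mul_mem_center_of_commute_conj hq.mulAut (hA _ (MulAut.conj b))
    rw [hq.mulAut_apply, ← mul_assoc, ← mul_inv_rev] at h
    simpa [pow_two] using inv_mem (mul_mem h (inv_mem (hq.mem_center b)))
  obtain ⟨m, hm⟩ := hp.odd_of_ne_two hp2
  have hb : b = (b ^ 2) ^ (m + 1) := by
    rw [← pow_mul, show 2 * (m + 1) = p + 1 by omega, pow_succ, hexp, one_mul]
  rw [hb]
  exact mem_center_iff.mp (pow_mem hsq _) a

theorem IsPGroup.lt_orderOf_of_pow_ne_one {p : ℕ} [hp : Fact p.Prime] (hpG : IsPGroup p G)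
    {x : G} (hx : x ^ p ≠ 1) : p < orderOf x := by
  obtain ⟨n, hn⟩ := IsPGroup.iff_orderOf.mp hpG x
  have hn1 : 1 < n := by
    by_contra! hn1
    exact hx (orderOf_dvd_iff_pow_eq_one.mp (hn ▸ by simpa using Nat.pow_dvd_pow p hn1))
  simpa [hn] using Nat.pow_lt_pow_right hp.out.one_lt hn1

end

/-- The exponent of a Miller `p`-group is greater than `p`; that is,
there is an element `x` with `x ^ p ≠ 1`. -/
theorem miller_pGroup_exponent_gt
    (p : ℕ) (hp : p.Prime) (G : Type*) [Group G]
    (hG : IsMiller G) (hpG : IsPGroup p G) :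
    p < Monoid.exponent G ∧ ∃ x : G, x ^ p ≠ 1 := by
  obtain ⟨_, ⟨a, b, hab⟩, hA⟩ := hG
  have := Fact.mk hp
  obtain ⟨x, hx⟩ : ∃ x : G, x ^ p ≠ 1 := by
    by_contra! hexp
    exact hab (mul_comm_of_exponent_prime_of_commute_mulAut hp hexp hA a b)
  exact ⟨(hpG.lt_orderOf_of_pow_ne_one hx).trans_le
    (Monoid.orderOf_le_exponent Monoid.ExponentExists.of_finite x), x, hx⟩
end

section
/- Let p be a prime and let G be a finite p-group which is both a Miller group and a Camina group. Then every automorphism of G is class-preserving: for every automorphism φ of G and every x ∈ G there exists g ∈ G with φ(x) = g·x·g⁻¹. -/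
/-- A Camina group: for every `x ∉ [G,G]`, the conjugacy class of `x` is the
coset `x[G,G]`. -/
def IsCamina (G : Type*) [Group G] : Prop :=
  ∀ x : G, x ∉ commutator G →
    ∀ y : G, IsConj x y ↔ ∃ c ∈ commutator G, y = x * c

/-!
Since `Aut G` is abelian, every automorphism `φ` commutes with each inner automorphism, which
makes `x⁻¹ φ(x)` central for all `x`; such a central automorphism fixes every commutator and hence
`[G,G]` pointwise. For a non-abelian Camina group the center lies in `[G,G]`, so for `x ∉ [G,G]`
the image `φ(x) ∈ x[G,G]` is a conjugate of `x`.
-/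

open scoped commutatorElement

section

variable {G : Type*} [Group G]

theorem MulAut.inv_mul_apply_mem_center_of_commute_conj_s19 {φ : MulAut G} {x : G}
    (h : φ * MulAut.conj x = MulAut.conj x * φ) : x⁻¹ * φ x ∈ Subgroup.center G := by
  rw [Subgroup.mem_center_iff]
  intro y
  -- `φ ∘ conj x = conj (φ x) ∘ φ`, so commuting with `conj x` forces `conj (φ x) = conj x`.
  have hy : φ x * y * (φ x)⁻¹ = x * y * x⁻¹ := by
    simpa [MulAut.conj_apply] using congrArg (fun ψ : MulAut G => ψ (φ.symm y)) h
  calc y * (x⁻¹ * φ x) = x⁻¹ * (x * y * x⁻¹) * φ x := by group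
    _ = x⁻¹ * (φ x * y * (φ x)⁻¹) * φ x := by rw [hy]
    _ = x⁻¹ * φ x * y := by group

theorem commutatorElement_mul_mul_of_mem_center (a b : G) {z w : G}
    (hz : z ∈ Subgroup.center G) (hw : w ∈ Subgroup.center G) :
    ⁅a * z, b * w⁆ = ⁅a, b⁆ := by
  rw [Subgroup.mem_center_iff] at hz hw
  simp only [commutatorElement_def, mul_inv_rev]
  calc a * z * (b * w) * (z⁻¹ * a⁻¹) * (w⁻¹ * b⁻¹)
      = a * (b * w) * z * z⁻¹ * a⁻¹ * (w⁻¹ * b⁻¹) := by rw [mul_assoc a z, ← hz]; group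
    _ = a * b * (a⁻¹ * w) * (w⁻¹ * b⁻¹) := by rw [hw a⁻¹]; group
    _ = a * b * a⁻¹ * b⁻¹ := by group

theorem MulAut.apply_eq_self_of_mem_commutator_s19 {φ : MulAut G}
    (hφ : ∀ x, x⁻¹ * φ x ∈ Subgroup.center G) {x : G} (hx : x ∈ commutator G) : φ x = x := by
  suffices commutator G ≤ (φ : G →* G).eqLocus (MonoidHom.id G) from this hx
  rw [commutator_eq_closure, Subgroup.closure_le]
  rintro _ ⟨a, b, rfl⟩
  have hφa : φ a = a * (a⁻¹ * φ a) := by group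
  have hφb : φ b = b * (b⁻¹ * φ b) := by group
  change φ ⁅a, b⁆ = ⁅a, b⁆
  rw [map_commutatorElement, hφa, hφb]
  exact commutatorElement_mul_mul_of_mem_center a b (hφ a) (hφ b)

theorem IsCamina.center_le_commutator (hcam : IsCamina G) (hG : ∃ a b : G, a * b ≠ b * a) :
    Subgroup.center G ≤ commutator G := by
  obtain ⟨a, b, hab⟩ := hG
  intro z hz
  by_contra hzG
  -- The class of a central `z` is `{z}`, while Camina makes it `z[G,G]`; so `[G,G]` is trivial.
  have hcomm_trivial : ∀ c ∈ commutator G, c = 1 := by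
    intro c hc
    have hconj : IsConj z (z * c) := (hcam z hzG (z * c)).2 ⟨c, hc, rfl⟩
    obtain ⟨u, hu⟩ := isConj_iff.mp hconj
    rw [Subgroup.mem_center_iff.mp hz u, mul_inv_cancel_right] at hu
    exact mul_eq_left.mp hu.symm
  exact hab <| commutatorElement_eq_one_iff_mul_comm.mp <|
    hcomm_trivial _ (Subgroup.commutator_mem_commutator (Subgroup.mem_top a) (Subgroup.mem_top b))

theorem IsMiller.inv_mul_apply_mem_center (hG : IsMiller G) (φ : MulAut G) (x : G) :
    x⁻¹ * φ x ∈ Subgroup.center G :=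
  MulAut.inv_mul_apply_mem_center_of_commute_conj_s19 (hG.2.2 φ (MulAut.conj x))

end

theorem miller_camina_aut_class_preserving_general
    (G : Type*) [Group G] (hG : IsMiller G)
    (hcam : IsCamina G) :
    ∀ (φ : MulAut G) (x : G), ∃ g : G, φ x = g * x * g⁻¹ := by
  intro φ x
  have hcentral := hG.inv_mul_apply_mem_center φ
  by_cases hx : x ∈ commutator G
  · exact ⟨1, by rw [MulAut.apply_eq_self_of_mem_commutator_s19 hcentral hx]; group⟩
  · obtain ⟨g, hg⟩ := isConj_iff.mp <| (hcam x hx (φ x)).2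
      ⟨x⁻¹ * φ x, hcam.center_le_commutator hG.2.1 (hcentral x), (mul_inv_cancel_left x _).symm⟩
    exact ⟨g, hg.symm⟩

/-- If a finite `p`-group is both Miller and Camina, then all its automorphisms are
class-preserving. -/
theorem miller_camina_aut_class_preserving
    (p : ℕ) (hp : p.Prime)
    (G : Type*) [Group G] (hG : IsMiller G) (hpG : IsPGroup p G)
    (hcam : IsCamina G) :
    ∀ (φ : MulAut G) (x : G), ∃ g : G, φ x = g * x * g⁻¹ :=
  miller_camina_aut_class_preserving_general G hG hcam
end
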